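/- arXiv:0809.1048 — 6 statements merged into one kernel-verified Lean document; each statement's English description precedes it below -/
import Mathlib

section
/- The set R = {x ∈ Quaternion ℚ₂ : ‖normSq x‖ ≤ 1} of quaternions over the 2-adic numbers whose reduced norm is a 2-adic integer is a subring of Quaternion ℚ₂: it contains 0 and 1 and is closed under addition, negation and multiplication. -/
open scoped Quaternion

/-!
The only nontrivial closure property is under addition. Since
`normSq (x + y) = normSq x + normSq y + 2 * re (x * star y)` and the norm is ultrametric,
it suffices that `‖2 * re q‖ ≤ 1` whenever `‖normSq q‖ ≤ 1`. This follows from the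
inequality `‖2 * a‖ ^ 2 ≤ ‖a ^ 2 + b ^ 2 + c ^ 2 + d ^ 2‖` on `ℚ₂`: after dividing by the
coordinate of largest norm, it says that a sum of four squares of 2-adic integers one of
which is `1` is not divisible by `8`, which holds because squares modulo `8` lie in `{0, 1, 4}`.
-/

lemma ZMod.one_add_sq_add_sq_add_sq_ne_zero_eight :
    ∀ y z w : ZMod 8, 1 + y ^ 2 + z ^ 2 + w ^ 2 ≠ 0 := by
  decide

lemma PadicInt.inv_four_le_norm_one_add_sq_add_sq_add_sq (b c d : ℤ_[2]) :
    (4 : ℝ)⁻¹ ≤ ‖1 + b ^ 2 + c ^ 2 + d ^ 2‖ := by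
  by_contra! h
  have hmem : 1 + b ^ 2 + c ^ 2 + d ^ 2 ∈ Ideal.span {((2 : ℕ) : ℤ_[2]) ^ 3} := by
    rw [← PadicInt.norm_le_pow_iff_mem_span_pow, PadicInt.norm_le_pow_iff_norm_lt_pow_add_one]
    norm_num
    linarith
  rw [← PadicInt.ker_toZModPow, RingHom.mem_ker] at hmem
  exact ZMod.one_add_sq_add_sq_add_sq_ne_zero_eight _ _ _ (by simpa using hmem)

lemma Padic.norm_sq_le_four_mul_norm_sum_sq_of_le (a b c d : ℚ_[2]) (hb : ‖b‖ ≤ ‖a‖)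
    (hc : ‖c‖ ≤ ‖a‖) (hd : ‖d‖ ≤ ‖a‖) : ‖a‖ ^ 2 ≤ 4 * ‖a ^ 2 + b ^ 2 + c ^ 2 + d ^ 2‖ := by
  rcases eq_or_ne a 0 with rfl | ha
  · simp_all
  have hquot {x : ℚ_[2]} (hx : ‖x‖ ≤ ‖a‖) : ‖x / a‖ ≤ 1 := by
    rw [norm_div]; exact div_le_one_of_le₀ hx (norm_nonneg a)
  have hunit : 4⁻¹ ≤ ‖1 + (b / a) ^ 2 + (c / a) ^ 2 + (d / a) ^ 2‖ :=
    PadicInt.inv_four_le_norm_one_add_sq_add_sq_add_sq ⟨b / a, hquot hb⟩ ⟨c / a, hquot hc⟩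
      ⟨d / a, hquot hd⟩
  have hscale : a ^ 2 + b ^ 2 + c ^ 2 + d ^ 2 =
      a ^ 2 * (1 + (b / a) ^ 2 + (c / a) ^ 2 + (d / a) ^ 2) := by
    field_simp
  rw [hscale, norm_mul, norm_pow]
  nlinarith [sq_nonneg ‖a‖]

lemma Padic.norm_two_mul_sq_le_norm_sum_sq (a b c d : ℚ_[2]) :
    ‖2 * a‖ ^ 2 ≤ ‖a ^ 2 + b ^ 2 + c ^ 2 + d ^ 2‖ := by
  obtain ⟨u, v, w, x, hsum, hau, hvu, hwu, hxu⟩ : ∃ u v w x : ℚ_[2],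
      a ^ 2 + b ^ 2 + c ^ 2 + d ^ 2 = u ^ 2 + v ^ 2 + w ^ 2 + x ^ 2 ∧
      ‖a‖ ≤ ‖u‖ ∧ ‖v‖ ≤ ‖u‖ ∧ ‖w‖ ≤ ‖u‖ ∧ ‖x‖ ≤ ‖u‖ := by
    obtain ⟨i, hi⟩ := Finite.exists_max fun i => ‖![a, b, c, d] i‖
    fin_cases i <;> simp [Fin.forall_fin_succ] at hi
    exacts [⟨a, b, c, d, rfl, le_rfl, hi⟩, ⟨b, a, c, d, by ring, hi.1, hi⟩,
      ⟨c, a, b, d, by ring, hi.1, hi⟩, ⟨d, a, b, c, by ring, hi.1, hi⟩]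
  have h2 : ‖(2 : ℚ_[2])‖ = 2⁻¹ := by simpa using Padic.norm_p (p := 2)
  have hu := Padic.norm_sq_le_four_mul_norm_sum_sq_of_le u v w x hvu hwu hxu
  rw [norm_mul, h2, hsum]
  nlinarith [norm_nonneg a]

lemma Quaternion.norm_two_mul_re_sq_le_norm_normSq (q : ℍ[ℚ_[2]]) :
    ‖2 * q.re‖ ^ 2 ≤ ‖normSq q‖ := by
  rw [normSq_def']
  exact Padic.norm_two_mul_sq_le_norm_sum_sq _ _ _ _

def hurwitzIntegers : Subring ℍ[ℚ_[2]] where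
  carrier := {x | ‖Quaternion.normSq x‖ ≤ 1}
  zero_mem' := by simp
  one_mem' := by simp
  mul_mem' {x y} hx hy := by
    rw [Set.mem_ofPred_eq, map_mul, norm_mul]
    exact mul_le_one₀ hx (norm_nonneg _) hy
  neg_mem' {x} hx := by rwa [Set.mem_ofPred_eq, Quaternion.normSq_neg]
  add_mem' {x y} hx hy := by
    have hxy : ‖Quaternion.normSq (x * star y)‖ ≤ 1 := by
      rw [map_mul, Quaternion.normSq_star, norm_mul]
      exact mul_le_one₀ hx (norm_nonneg _) hy
    have htrace : ‖2 * (x * star y).re‖ ≤ 1 := by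
      have := (x * star y).norm_two_mul_re_sq_le_norm_normSq
      nlinarith [norm_nonneg (2 * (x * star y).re)]
    rw [Set.mem_ofPred_eq, Quaternion.normSq_add]
    exact IsUltrametricDist.norm_add_le_max _ _ |>.trans <| max_le
      (IsUltrametricDist.norm_add_le_max _ _ |>.trans (max_le hx hy)) htrace

/-- The set `R = {x ∈ ℍ[ℚ₂] : ‖normSq x‖ ≤ 1}` of quaternions over the 2-adic numbers
whose reduced norm is a 2-adic integer is a subring of `ℍ[ℚ₂]`: it contains 0 and 1
and is closed under addition, negation and multiplication. -/
theorem hurwitz_integers_subring :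
    (0 : ℍ[ℚ_[2]]) ∈ {x : ℍ[ℚ_[2]] | ‖Quaternion.normSq x‖ ≤ 1} ∧
    (1 : ℍ[ℚ_[2]]) ∈ {x : ℍ[ℚ_[2]] | ‖Quaternion.normSq x‖ ≤ 1} ∧
    (∀ x y : ℍ[ℚ_[2]], ‖Quaternion.normSq x‖ ≤ 1 → ‖Quaternion.normSq y‖ ≤ 1 →
      ‖Quaternion.normSq (x + y)‖ ≤ 1) ∧
    (∀ x : ℍ[ℚ_[2]], ‖Quaternion.normSq x‖ ≤ 1 → ‖Quaternion.normSq (-x)‖ ≤ 1) ∧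
    (∀ x y : ℍ[ℚ_[2]], ‖Quaternion.normSq x‖ ≤ 1 → ‖Quaternion.normSq y‖ ≤ 1 →
      ‖Quaternion.normSq (x * y)‖ ≤ 1) :=
  ⟨hurwitzIntegers.zero_mem, hurwitzIntegers.one_mem, fun _ _ => hurwitzIntegers.add_mem,
    fun _ => hurwitzIntegers.neg_mem, fun _ _ => hurwitzIntegers.mul_mem⟩
end

section
/- The set 𝔪 = {x ∈ Quaternion ℚ₂ : ‖normSq x‖ ≤ 1/2} is a two-sided ideal of the subring R = {x : ‖normSq x‖ ≤ 1}: it contains 0, is closed under addition and negation, and for every x ∈ 𝔪 and r ∈ R both r*x ∈ 𝔪 and x*r ∈ 𝔪. -/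
open scoped Quaternion

lemma key8 : ∀ b c d : ZMod (2^3), 1 + b^2 + c^2 + d^2 ≠ 0 := by decide

lemma keyZ (b c d : ℤ_[2]) : (1/4 : ℝ) ≤ ‖(1 + b^2 + c^2 + d^2 : ℤ_[2])‖ := by
  by_contra h
  push_neg at h
  have h2 : ‖(1 + b^2 + c^2 + d^2 : ℤ_[2])‖ ≤ ((2:ℕ) : ℝ) ^ (-(3:ℕ) : ℤ) := by
    rw [PadicInt.norm_le_pow_iff_norm_lt_pow_add_one]
    norm_num
    linarith
  have hmem := (PadicInt.norm_le_pow_iff_mem_span_pow (1 + b^2 + c^2 + d^2) 3).1 h2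
  rw [← PadicInt.ker_toZModPow 3] at hmem
  have h0 : PadicInt.toZModPow 3 (1 + b^2 + c^2 + d^2) = 0 := hmem
  simp only [map_add, map_one, map_pow] at h0
  exact key8 _ _ _ h0

lemma keyQ2 (a b c d : ℚ_[2]) (hs : ‖a^2 + b^2 + c^2 + d^2‖ ≤ 1/2)
    (hb : ‖b‖ ≤ ‖a‖) (hc : ‖c‖ ≤ ‖a‖) (hd : ‖d‖ ≤ ‖a‖) : ‖a‖ ≤ 1 := by
  rcases eq_or_ne a 0 with rfl | ha
  · simp
  have hapos : (0:ℝ) < ‖a‖ := norm_pos_iff.2 ha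
  by_contra hgt
  push_neg at hgt
  have h2 : (2:ℝ) ≤ ‖a‖ := by
    by_contra hlt
    push_neg at hlt
    have := (Padic.norm_le_pow_iff_norm_lt_pow_add_one a 0).2 (by norm_num; exact hlt)
    norm_num at this
    linarith
  set B : ℤ_[2] := ⟨b/a, by rw [norm_div]; exact div_le_one_of_le₀ hb hapos.le⟩ with hB
  set C : ℤ_[2] := ⟨c/a, by rw [norm_div]; exact div_le_one_of_le₀ hc hapos.le⟩ with hC
  set D : ℤ_[2] := ⟨d/a, by rw [norm_div]; exact div_le_one_of_le₀ hd hapos.le⟩ with hD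
  have hco : ((1 + B^2 + C^2 + D^2 : ℤ_[2]) : ℚ_[2]) = 1 + (b/a)^2 + (c/a)^2 + (d/a)^2 := by
    push_cast
    rfl
  have heq : a^2 + b^2 + c^2 + d^2 = a^2 * ((1 + B^2 + C^2 + D^2 : ℤ_[2]) : ℚ_[2]) := by
    rw [hco]
    field_simp
  rw [heq, norm_mul, norm_pow, ← PadicInt.norm_def] at hs
  have hk := keyZ B C D
  nlinarith

lemma compBound (x : ℍ[ℚ_[2]]) (hx : ‖Quaternion.normSq x‖ ≤ 1/2) :
    ‖x.re‖ ≤ 1 ∧ ‖x.imI‖ ≤ 1 ∧ ‖x.imJ‖ ≤ 1 ∧ ‖x.imK‖ ≤ 1 := by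
  have key : ∀ a b c d : ℚ_[2], a^2 + b^2 + c^2 + d^2 = Quaternion.normSq x →
      ‖b‖ ≤ ‖a‖ → ‖c‖ ≤ ‖a‖ → ‖d‖ ≤ ‖a‖ → ‖a‖ ≤ 1 := fun a b c d he hb hc hd =>
    keyQ2 a b c d (he ▸ hx) hb hc hd
  obtain ⟨a, hor, h1, h2, h3, h4⟩ : ∃ a : ℚ_[2],
      (a = x.re ∨ a = x.imI ∨ a = x.imJ ∨ a = x.imK) ∧
      ‖x.re‖ ≤ ‖a‖ ∧ ‖x.imI‖ ≤ ‖a‖ ∧ ‖x.imJ‖ ≤ ‖a‖ ∧ ‖x.imK‖ ≤ ‖a‖ := by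
    rcases le_total ‖x.re‖ ‖x.imI‖ with h | h <;>
      rcases le_total ‖x.imJ‖ ‖x.imK‖ with h' | h'
    · rcases le_total ‖x.imI‖ ‖x.imK‖ with h'' | h''
      · exact ⟨x.imK, by tauto, by linarith, by linarith, by linarith, le_refl _⟩
      · exact ⟨x.imI, by tauto, by linarith, le_refl _, by linarith, by linarith⟩
    · rcases le_total ‖x.imI‖ ‖x.imJ‖ with h'' | h''
      · exact ⟨x.imJ, by tauto, by linarith, by linarith, le_refl _, by linarith⟩
      · exact ⟨x.imI, by tauto, by linarith, le_refl _, by linarith, by linarith⟩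
    · rcases le_total ‖x.re‖ ‖x.imK‖ with h'' | h''
      · exact ⟨x.imK, by tauto, by linarith, by linarith, by linarith, le_refl _⟩
      · exact ⟨x.re, by tauto, le_refl _, by linarith, by linarith, by linarith⟩
    · rcases le_total ‖x.re‖ ‖x.imJ‖ with h'' | h''
      · exact ⟨x.imJ, by tauto, by linarith, by linarith, le_refl _, by linarith⟩
      · exact ⟨x.re, by tauto, le_refl _, by linarith, by linarith, by linarith⟩
  have ha1 : ‖a‖ ≤ 1 := by
    rcases hor with rfl | rfl | rfl | rfl
    · exact key x.re x.imI x.imJ x.imK (by rw [Quaternion.normSq_def']) h2 h3 h4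
    · exact key x.imI x.re x.imJ x.imK (by rw [Quaternion.normSq_def']; ring) h1 h3 h4
    · exact key x.imJ x.re x.imI x.imK (by rw [Quaternion.normSq_def']; ring) h1 h2 h4
    · exact key x.imK x.re x.imI x.imJ (by rw [Quaternion.normSq_def']; ring) h1 h2 h3
  exact ⟨h1.trans ha1, h2.trans ha1, h3.trans ha1, h4.trans ha1⟩

/-- The set `𝔪 = {x ∈ ℍ[ℚ₂] : ‖normSq x‖ ≤ 1/2}` is a two-sided ideal of the subring
`R = {x : ‖normSq x‖ ≤ 1}`: it contains 0, is closed under addition and negation, and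
for every `x ∈ 𝔪` and `r ∈ R` both `r*x ∈ 𝔪` and `x*r ∈ 𝔪`. -/
theorem hurwitz_maximal_ideal_is_two_sided_ideal :
    (0 : ℍ[ℚ_[2]]) ∈ {x : ℍ[ℚ_[2]] | ‖Quaternion.normSq x‖ ≤ 1 / 2} ∧
    (∀ x y : ℍ[ℚ_[2]], ‖Quaternion.normSq x‖ ≤ 1 / 2 → ‖Quaternion.normSq y‖ ≤ 1 / 2 →
      ‖Quaternion.normSq (x + y)‖ ≤ 1 / 2) ∧
    (∀ x : ℍ[ℚ_[2]], ‖Quaternion.normSq x‖ ≤ 1 / 2 → ‖Quaternion.normSq (-x)‖ ≤ 1 / 2) ∧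
    (∀ x : ℍ[ℚ_[2]], ‖Quaternion.normSq x‖ ≤ 1 / 2 →
      ∀ r : ℍ[ℚ_[2]], ‖Quaternion.normSq r‖ ≤ 1 →
        ‖Quaternion.normSq (r * x)‖ ≤ 1 / 2 ∧ ‖Quaternion.normSq (x * r)‖ ≤ 1 / 2) := by
  refine ⟨by simp [Set.mem_setOf_eq], ?_, ?_, ?_⟩
  · intro x y hx hy
    obtain ⟨hx1, hx2, hx3, hx4⟩ := compBound x hx
    obtain ⟨hy1, hy2, hy3, hy4⟩ := compBound y hy
    have hexp : Quaternion.normSq (x + y) = Quaternion.normSq x + Quaternion.normSq y +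
        2 * (x.re * y.re + x.imI * y.imI + x.imJ * y.imJ + x.imK * y.imK) := by
      simp only [Quaternion.normSq_def', Quaternion.re_add, Quaternion.imI_add,
        Quaternion.imJ_add, Quaternion.imK_add]
      ring
    have ht : ‖x.re * y.re + x.imI * y.imI + x.imJ * y.imJ + x.imK * y.imK‖ ≤ 1 := by
      have m1 : ‖x.re * y.re‖ ≤ 1 := by rw [norm_mul]; exact mul_le_one₀ hx1 (norm_nonneg _) hy1
      have m2 : ‖x.imI * y.imI‖ ≤ 1 := by rw [norm_mul]; exact mul_le_one₀ hx2 (norm_nonneg _) hy2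
      have m3 : ‖x.imJ * y.imJ‖ ≤ 1 := by rw [norm_mul]; exact mul_le_one₀ hx3 (norm_nonneg _) hy3
      have m4 : ‖x.imK * y.imK‖ ≤ 1 := by rw [norm_mul]; exact mul_le_one₀ hx4 (norm_nonneg _) hy4
      calc ‖x.re * y.re + x.imI * y.imI + x.imJ * y.imJ + x.imK * y.imK‖
          ≤ max ‖x.re * y.re + x.imI * y.imI + x.imJ * y.imJ‖ ‖x.imK * y.imK‖ :=
            Padic.nonarchimedean _ _
        _ ≤ max (max ‖x.re * y.re + x.imI * y.imI‖ ‖x.imJ * y.imJ‖) ‖x.imK * y.imK‖ := by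
            gcongr; exact Padic.nonarchimedean _ _
        _ ≤ max (max (max ‖x.re * y.re‖ ‖x.imI * y.imI‖) ‖x.imJ * y.imJ‖) ‖x.imK * y.imK‖ := by
            gcongr; exact Padic.nonarchimedean _ _
        _ ≤ 1 := by
            simp only [max_le_iff]
            exact ⟨⟨⟨m1, m2⟩, m3⟩, m4⟩
    have h2t : ‖2 * (x.re * y.re + x.imI * y.imI + x.imJ * y.imJ + x.imK * y.imK)‖ ≤ 1/2 := by
      rw [norm_mul]
      have : ‖(2 : ℚ_[2])‖ = 1/2 := by
        have := @Padic.norm_p 2 _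
        norm_num at this ⊢
        exact_mod_cast this
      rw [this]
      nlinarith [norm_nonneg (x.re * y.re + x.imI * y.imI + x.imJ * y.imJ + x.imK * y.imK)]
    rw [hexp]
    calc ‖Quaternion.normSq x + Quaternion.normSq y +
        2 * (x.re * y.re + x.imI * y.imI + x.imJ * y.imJ + x.imK * y.imK)‖
        ≤ max ‖Quaternion.normSq x + Quaternion.normSq y‖
          ‖2 * (x.re * y.re + x.imI * y.imI + x.imJ * y.imJ + x.imK * y.imK)‖ :=
          Padic.nonarchimedean _ _
      _ ≤ max (max ‖Quaternion.normSq x‖ ‖Quaternion.normSq y‖)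
          ‖2 * (x.re * y.re + x.imI * y.imI + x.imJ * y.imJ + x.imK * y.imK)‖ := by
          gcongr; exact Padic.nonarchimedean _ _
      _ ≤ 1/2 := by
          simp only [max_le_iff]
          exact ⟨⟨hx, hy⟩, h2t⟩
  · intro x hx
    rwa [Quaternion.normSq_neg]
  · intro x hx r hr
    constructor
    · rw [map_mul, norm_mul]
      calc ‖Quaternion.normSq r‖ * ‖Quaternion.normSq x‖ ≤ 1 * (1/2) := by
            apply mul_le_mul hr hx (norm_nonneg _) zero_le_one
        _ = 1/2 := by norm_num
    · rw [map_mul, norm_mul]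
      calc ‖Quaternion.normSq x‖ * ‖Quaternion.normSq r‖ ≤ (1/2) * 1 := by
            apply mul_le_mul hx hr (norm_nonneg _) (by norm_num)
        _ = 1/2 := by norm_num
end

section
/- Every element x of Quaternion ℚ₂ with ‖normSq x‖ = 1 is a unit of the ring R = {y : ‖normSq y‖ ≤ 1}, with two-sided inverse again in R. Consequently every proper two-sided ideal of R is contained in 𝔪 = {x : ‖normSq x‖ ≤ 1/2}, i.e. 𝔪 is the maximal two-sided ideal of R. -/
open scoped Quaternion

/-! A quaternion `x` over any field with `normSq x ≠ 0` has the two-sided inverse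
`(normSq x)⁻¹ • star x`, whose reduced norm is `(normSq x)⁻¹`. So an element of `R` of reduced norm
of absolute value `1` is a unit of `R`, and an ideal containing one is all of `R`. Every other
element of `R` lies in `𝔪`, because the `2`-adic absolute value takes no value strictly between
`1/2` and `1`. -/

namespace Quaternion

section Field

variable {K : Type*} [Field K] {x : ℍ[K]}

theorem mul_inv_smul_star (hx : normSq x ≠ 0) : x * ((normSq x)⁻¹ • star x) = 1 := by
  rw [Algebra.mul_smul_comm, self_mul_star, ← coe_mul_eq_smul, ← coe_mul, inv_mul_cancel₀ hx,
    coe_one]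

theorem inv_smul_star_mul (hx : normSq x ≠ 0) : ((normSq x)⁻¹ • star x) * x = 1 := by
  rw [Algebra.smul_mul_assoc, star_mul_self, ← coe_mul_eq_smul, ← coe_mul, inv_mul_cancel₀ hx,
    coe_one]

theorem normSq_inv_smul_star (x : ℍ[K]) : normSq ((normSq x)⁻¹ • star x) = (normSq x)⁻¹ := by
  rw [normSq_smul, normSq_star]
  simpa [sq] using mul_self_mul_inv (normSq x)⁻¹

end Field

theorem exists_inv_of_norm_normSq_eq_one {K : Type*} [NormedField K] {x : ℍ[K]}
    (hx : ‖normSq x‖ = 1) : ∃ y : ℍ[K], ‖normSq y‖ ≤ 1 ∧ x * y = 1 ∧ y * x = 1 := by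
  have hx0 : normSq x ≠ 0 := norm_ne_zero_iff.mp (hx.symm ▸ one_ne_zero)
  refine ⟨_, ?_, mul_inv_smul_star hx0, inv_smul_star_mul hx0⟩
  rw [normSq_inv_smul_star, norm_inv, hx, inv_one]

end Quaternion

theorem Padic.norm_le_inv_iff_norm_lt_one {p : ℕ} [Fact p.Prime] (a : ℚ_[p]) :
    ‖a‖ ≤ (p : ℝ)⁻¹ ↔ ‖a‖ < 1 := by
  simpa using Padic.norm_le_pow_iff_norm_lt_pow_add_one a (-1)

/-- Every `x ∈ ℍ[ℚ₂]` with `‖normSq x‖ = 1` is a unit of the ring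
`R = {y : ‖normSq y‖ ≤ 1}` with two-sided inverse again in `R`; consequently every
proper two-sided ideal of `R` is contained in `𝔪 = {x : ‖normSq x‖ ≤ 1/2}`, i.e.
`𝔪` is the maximal two-sided ideal of `R`. -/
theorem m_is_maximal_two_sided_ideal :
    (∀ x : ℍ[ℚ_[2]], ‖Quaternion.normSq x‖ = 1 →
      ∃ y : ℍ[ℚ_[2]], ‖Quaternion.normSq y‖ ≤ 1 ∧ x * y = 1 ∧ y * x = 1) ∧
    (∀ I : Set ℍ[ℚ_[2]],
      I ⊆ {x : ℍ[ℚ_[2]] | ‖Quaternion.normSq x‖ ≤ 1} →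
      (0 : ℍ[ℚ_[2]]) ∈ I →
      (∀ x ∈ I, ∀ y ∈ I, x + y ∈ I) →
      (∀ r : ℍ[ℚ_[2]], ‖Quaternion.normSq r‖ ≤ 1 → ∀ x ∈ I, r * x ∈ I ∧ x * r ∈ I) →
      I ≠ {x : ℍ[ℚ_[2]] | ‖Quaternion.normSq x‖ ≤ 1} →
      I ⊆ {x : ℍ[ℚ_[2]] | ‖Quaternion.normSq x‖ ≤ 1 / 2}) := by
  refine ⟨fun _ => Quaternion.exists_inv_of_norm_normSq_eq_one, fun I hIR _ _ hmul hne x hxI => ?_⟩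
  by_contra hx𝔪
  have hx : ‖Quaternion.normSq x‖ = 1 := (hIR hxI).antisymm <| not_lt.mp fun hlt =>
    hx𝔪 (by simpa using (Padic.norm_le_inv_iff_norm_lt_one _).mpr hlt)
  obtain ⟨y, hy, -, hyx⟩ := Quaternion.exists_inv_of_norm_normSq_eq_one hx
  have h1 : (1 : ℍ[ℚ_[2]]) ∈ I := hyx ▸ (hmul y hy x hxI).1
  refine hne (Set.Subset.antisymm hIR fun r hr => ?_)
  simpa using (hmul r hr 1 h1).1
end

section
/- The unit group (Quaternion ℚ₂)ˣ is generated by the set consisting of the unit a = (1 + i + j + k)/2, the unit b = 1 + i, and all units u with ‖normSq (u − 1)‖ ≤ 1/2; that is, the subgroup closure of {a, b} ∪ (1 + 𝔪) in (Quaternion ℚ₂)ˣ is the whole group. Equivalently, the quotient group Dˣ/(1 + 𝔪) is generated by the images of a and b. -/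
/-!
Multiplying a unit `u` by a suitable power of `b`, whose reduced norm is `2`, gives a unit `w`
whose reduced norm is a `2`-adic unit. Such a `w` has coordinates either all in `ℤ₂` or all of
norm `2`: this is the fact that odd squares are `1` mod `8`. Since
`normSq (w - 1) = normSq w + 1 - 2 re w`, the unit `w` lies in `1 + 𝔪` as soon as `re w ∈ ℤ₂`.
If neither `re w` nor `re (w a)` is integral, both have norm `2`, and then
`re (w a²) = re (w a) - re w` is integral because `a² = a - 1`.
-/

open scoped Quaternion

namespace PadicInt

variable {p : ℕ} [Fact p.Prime]

theorem toZModPow_eq_zero_iff (x : ℤ_[p]) (n : ℕ) :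
    toZModPow n x = 0 ↔ ‖x‖ ≤ (p : ℝ) ^ (-(n : ℤ)) := by
  rw [← RingHom.mem_ker, ker_toZModPow, norm_le_pow_iff_mem_span_pow]

theorem norm_lt_one_iff_cast_toZModPow_eq_zero (x : ℤ_[p]) {n : ℕ} (hn : 1 ≤ n) :
    ‖x‖ < 1 ↔ (ZMod.cast (toZModPow n x) : ZMod (p ^ 1)) = 0 := by
  rw [cast_toZModPow 1 n hn, toZModPow_eq_zero_iff, norm_le_pow_iff_norm_lt_pow_add_one]
  norm_num

end PadicInt

theorem ZMod.forall_even_of_sum_four_sq_eq_zero_mod_eight :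
    ∀ a b c d : ZMod (2 ^ 3), a ^ 2 + b ^ 2 + c ^ 2 + d ^ 2 = 0 →
      (a.cast : ZMod (2 ^ 1)) = 0 ∧ (b.cast : ZMod (2 ^ 1)) = 0 ∧
        (c.cast : ZMod (2 ^ 1)) = 0 ∧ (d.cast : ZMod (2 ^ 1)) = 0 := by
  decide

theorem ZMod.all_even_or_all_odd_of_sum_four_sq_eq_zero_mod_four :
    ∀ a b c d : ZMod (2 ^ 2), a ^ 2 + b ^ 2 + c ^ 2 + d ^ 2 = 0 →
      ((a.cast : ZMod (2 ^ 1)) = 0 ∧ (b.cast : ZMod (2 ^ 1)) = 0 ∧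
        (c.cast : ZMod (2 ^ 1)) = 0 ∧ (d.cast : ZMod (2 ^ 1)) = 0) ∨
      ((a.cast : ZMod (2 ^ 1)) ≠ 0 ∧ (b.cast : ZMod (2 ^ 1)) ≠ 0 ∧
        (c.cast : ZMod (2 ^ 1)) ≠ 0 ∧ (d.cast : ZMod (2 ^ 1)) ≠ 0) := by
  decide

namespace PadicInt

theorem forall_norm_lt_one_of_norm_sum_sq_lt (z : Fin 4 → ℤ_[2])
    (h : ‖∑ i, z i ^ 2‖ < 4⁻¹) : ∀ i, ‖z i‖ < 1 := by
  have h8 : toZModPow 3 (∑ i, z i ^ 2) = 0 := by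
    rw [toZModPow_eq_zero_iff, norm_le_pow_iff_norm_lt_pow_add_one]
    norm_num
    linarith
  rw [Fin.sum_univ_four] at h8
  simp only [map_add, map_pow] at h8
  obtain ⟨h0, h1, h2, h3⟩ := ZMod.forall_even_of_sum_four_sq_eq_zero_mod_eight _ _ _ _ h8
  intro i
  rw [norm_lt_one_iff_cast_toZModPow_eq_zero _ (by norm_num : 1 ≤ 3)]
  fin_cases i <;> assumption

theorem forall_norm_lt_one_or_forall_norm_eq_one_of_norm_sum_sq_le (z : Fin 4 → ℤ_[2])
    (h : ‖∑ i, z i ^ 2‖ ≤ 4⁻¹) : (∀ i, ‖z i‖ < 1) ∨ ∀ i, ‖z i‖ = 1 := by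
  have h4 : toZModPow 2 (∑ i, z i ^ 2) = 0 := by
    rw [toZModPow_eq_zero_iff]
    norm_num
    linarith
  rw [Fin.sum_univ_four] at h4
  simp only [map_add, map_pow] at h4
  have hparity (i : Fin 4) := norm_lt_one_iff_cast_toZModPow_eq_zero (z i) (by norm_num : 1 ≤ 2)
  rcases ZMod.all_even_or_all_odd_of_sum_four_sq_eq_zero_mod_four _ _ _ _ h4 with
    ⟨h0, h1, h2, h3⟩ | ⟨h0, h1, h2, h3⟩
  · left
    intro i
    rw [hparity]
    fin_cases i <;> assumption
  · right
    intro i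
    refine le_antisymm (norm_le_one _) (not_lt.1 ?_)
    rw [hparity]
    fin_cases i <;> assumption

end PadicInt

namespace Padic

theorem le_norm_of_one_lt_norm {p : ℕ} [Fact p.Prime] {x : ℚ_[p]} (h : 1 < ‖x‖) :
    (p : ℝ) ≤ ‖x‖ := by
  have := (norm_le_pow_iff_norm_lt_pow_add_one x 0).not
  simp only [zpow_zero, zero_add, zpow_one, not_le, not_lt] at this
  exact this.1 h

theorem norm_two_eq_inv_two : ‖(2 : ℚ_[2])‖ = 2⁻¹ := by
  simpa using norm_p (p := 2)

theorem norm_sub_one_lt_one_of_norm_eq_one {x : ℚ_[2]} (hx : ‖x‖ = 1) : ‖x - 1‖ < 1 := by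
  obtain ⟨n, hn, hmem⟩ := PadicInt.exists_mem_range (PadicInt.mkUnits hx : ℤ_[2])
  rw [IsLocalRing.mem_maximalIdeal, PadicInt.mem_nonunits,
    ← PadicInt.padic_norm_e_of_padicInt] at hmem
  push_cast [PadicInt.mkUnits_eq] at hmem
  interval_cases n
  · simp [hx] at hmem
  · simpa using hmem

theorem norm_sub_lt_of_norm_eq {x y : ℚ_[2]} (hy : y ≠ 0) (h : ‖x‖ = ‖y‖) :
    ‖x - y‖ < ‖y‖ := by
  have hxy : ‖x / y‖ = 1 := by rw [norm_div, h, div_self (norm_ne_zero_iff.2 hy)]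
  calc ‖x - y‖ = ‖x / y - 1‖ * ‖y‖ := by
        rw [← norm_mul, sub_mul, div_mul_cancel₀ _ hy, one_mul]
    _ < 1 * ‖y‖ := by gcongr; exact norm_sub_one_lt_one_of_norm_eq_one hxy
    _ = ‖y‖ := one_mul _

theorem forall_norm_le_one_or_forall_norm_eq_two_of_norm_sum_sq_le_one (c : Fin 4 → ℚ_[2])
    (h : ‖∑ i, c i ^ 2‖ ≤ 1) : (∀ i, ‖c i‖ ≤ 1) ∨ ∀ i, ‖c i‖ = 2 := by
  by_cases hall : ∀ i, ‖c i‖ ≤ 1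
  · exact Or.inl hall
  right
  obtain ⟨i₀, hmax⟩ := Finite.exists_max fun i => ‖c i‖
  set g := c i₀
  have hg1 : 1 < ‖g‖ := by
    push Not at hall
    obtain ⟨i, hi⟩ := hall
    exact hi.trans_le (hmax i)
  have hg0 : g ≠ 0 := norm_pos_iff.1 (one_pos.trans hg1)
  have hg2 : 2 ≤ ‖g‖ := by exact_mod_cast le_norm_of_one_lt_norm hg1
  choose z hzc using fun i => (⟨⟨c i / g, by
    rw [norm_div, div_le_one (norm_pos_iff.2 hg0)]; exact hmax i⟩, rfl⟩ :
      ∃ z : ℤ_[2], (z : ℚ_[2]) = c i / g)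
  have hz (i : Fin 4) : ‖z i‖ * ‖g‖ = ‖c i‖ := by
    rw [← PadicInt.padic_norm_e_of_padicInt, hzc, ← norm_mul, div_mul_cancel₀ _ hg0]
  have hsum : ‖∑ i, z i ^ 2‖ * ‖g‖ ^ 2 = ‖∑ i, c i ^ 2‖ := by
    have hcoe : ((∑ i, z i ^ 2 : ℤ_[2]) : ℚ_[2]) * g ^ 2 = ∑ i, c i ^ 2 := by
      rw [PadicInt.coe_sum, Finset.sum_mul]
      simp_rw [PadicInt.coe_pow, hzc, div_pow, div_mul_cancel₀ _ (pow_ne_zero 2 hg0)]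
    rw [← hcoe, norm_mul, norm_pow, PadicInt.padic_norm_e_of_padicInt]
  have hz0 : ‖z i₀‖ = 1 := by
    have := hz i₀
    rwa [mul_eq_right₀ (norm_ne_zero_iff.2 hg0)] at this
  have hquarter : ‖∑ i, z i ^ 2‖ ≤ 4⁻¹ := by
    nlinarith [norm_nonneg (∑ i, z i ^ 2), mul_le_mul_of_nonneg_left
      (pow_le_pow_left₀ zero_le_two hg2 2) (norm_nonneg (∑ i, z i ^ 2))]
  rcases PadicInt.forall_norm_lt_one_or_forall_norm_eq_one_of_norm_sum_sq_le z hquarter with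
    hlt | hone
  · exact absurd (hlt i₀) (by rw [hz0]; exact lt_irrefl 1)
  have hg : ‖g‖ = 2 := by
    refine le_antisymm (not_lt.1 fun hgt => ?_) hg2
    have hsmall : ‖∑ i, z i ^ 2‖ < 4⁻¹ := by nlinarith [norm_nonneg (∑ i, z i ^ 2)]
    exact (PadicInt.forall_norm_lt_one_of_norm_sum_sq_lt z hsmall i₀).ne hz0
  intro i
  rw [← hz i, hone i, hg, one_mul]

end Padic

namespace Quaternion

theorem isUnit_of_normSq_ne_zero {R : Type*} [Field R] {x : ℍ[R]} (h : normSq x ≠ 0) :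
    IsUnit x := by
  have hinv : (((normSq x)⁻¹ : R) : ℍ[R]) * normSq x = 1 := by
    rw [← Quaternion.coe_mul, inv_mul_cancel₀ h, Quaternion.coe_one]
  refine ⟨⟨x, ((normSq x)⁻¹ : R) * star x, ?_, ?_⟩, rfl⟩
  · rw [← mul_assoc, ← Quaternion.coe_commutes, mul_assoc, self_mul_star, hinv]
  · rw [mul_assoc, star_mul_self, hinv]

theorem norm_re_le_one_or_eq_two (x : ℍ[ℚ_[2]]) (h : ‖normSq x‖ ≤ 1) :
    ‖x.re‖ ≤ 1 ∨ ‖x.re‖ = 2 :=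
  (Padic.forall_norm_le_one_or_forall_norm_eq_two_of_norm_sum_sq_le_one
    ![x.re, x.imI, x.imJ, x.imK] (by simpa [Fin.sum_univ_four, normSq_def'] using h)).imp
    (· 0) (· 0)

theorem norm_normSq_sub_one_le_half {w : ℍ[ℚ_[2]]} (hw : ‖normSq w‖ = 1) (hre : ‖w.re‖ ≤ 1) :
    ‖normSq (w - 1)‖ ≤ 2⁻¹ := by
  have hexpand : normSq (w - 1) = (normSq w - (-1)) + 2 * -w.re := by
    rw [sub_eq_add_neg, normSq_add]
    simp
  have hodd : ‖normSq w - (-1)‖ ≤ 2⁻¹ := by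
    have hlt := Padic.norm_sub_lt_of_norm_eq (x := normSq w) (y := -1) (by norm_num) (by simp [hw])
    rw [norm_neg, norm_one] at hlt
    have hle := (Padic.norm_le_pow_iff_norm_lt_pow_add_one _ (-1)).2 (by simpa using hlt)
    simpa using hle
  have heven : ‖2 * -w.re‖ ≤ 2⁻¹ := by
    rw [norm_mul, Padic.norm_two_eq_inv_two, norm_neg]
    nlinarith [norm_nonneg w.re]
  rw [hexpand]
  exact (Padic.nonarchimedean _ _).trans (max_le hodd heven)

theorem exists_norm_normSq_mul_pow_sub_one_le_half {α : ℍ[ℚ_[2]]} (hα : ‖normSq α‖ = 1)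
    (hαα : α * α = α - 1) {w : ℍ[ℚ_[2]]} (hw : ‖normSq w‖ = 1) :
    ∃ k : ℕ, ‖normSq (w * α ^ k - 1)‖ ≤ 2⁻¹ := by
  have hnorm (k : ℕ) : ‖normSq (w * α ^ k)‖ = 1 := by simp [hw, hα]
  have of_re (k : ℕ) (h : ‖(w * α ^ k).re‖ ≤ 1) : ∃ k : ℕ, ‖normSq (w * α ^ k - 1)‖ ≤ 2⁻¹ :=
    ⟨k, norm_normSq_sub_one_le_half (hnorm k) h⟩
  rcases norm_re_le_one_or_eq_two w hw.le with h0 | h0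
  · exact of_re 0 (by simpa using h0)
  rcases norm_re_le_one_or_eq_two (w * α) (by simpa using (hnorm 1).le) with h1 | h1
  · exact of_re 1 (by simpa using h1)
  refine of_re 2 ?_
  have hre : (w * α ^ 2).re = (w * α).re - w.re := by
    rw [pow_two, hαα, mul_sub, mul_one, re_sub]
  have hlt := Padic.norm_sub_lt_of_norm_eq (norm_ne_zero_iff.1 (by rw [h0]; norm_num))
    (h1.trans h0.symm)
  rw [hre]
  exact (Padic.norm_le_pow_iff_norm_lt_pow_add_one _ 0).2 (by simpa [h0] using hlt)

theorem exists_norm_normSq_mul_zpow_eq_one {p : ℕ} [Fact p.Prime] {β : ℍ[ℚ_[p]]ˣ}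
    (hβ : ‖normSq (β : ℍ[ℚ_[p]])‖ = (p : ℝ)⁻¹) (u : ℍ[ℚ_[p]]ˣ) :
    ∃ n : ℤ, ‖normSq ((u * β ^ n : ℍ[ℚ_[p]]ˣ) : ℍ[ℚ_[p]])‖ = 1 := by
  let N : ℍ[ℚ_[p]]ˣ →* ℚ_[p]ˣ := Units.map normSq.toMonoidHom
  have hN (v : ℍ[ℚ_[p]]ˣ) : ((N v : ℚ_[p]ˣ) : ℚ_[p]) = normSq (v : ℍ[ℚ_[p]]) := rfl
  refine ⟨-(normSq (u : ℍ[ℚ_[p]])).valuation, ?_⟩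
  rw [← hN, map_mul, map_zpow, Units.val_mul, Units.val_zpow_eq_zpow_val, norm_mul, norm_zpow,
    hN, hN, hβ, Padic.norm_eq_zpow_neg_valuation (hN u ▸ (N u).ne_zero), inv_zpow', neg_neg,
    ← zpow_add₀ (by exact_mod_cast (Fact.out : p.Prime).ne_zero), neg_add_cancel, zpow_zero]

end Quaternion

/-- The unit group `ℍ[ℚ₂]ˣ` is generated by the unit `a = (1 + i + j + k)/2`, the unit
`b = 1 + i`, and all units `u` with `‖normSq (u − 1)‖ ≤ 1/2` (the group `1 + 𝔪`):
the subgroup closure of `{a, b} ∪ (1 + 𝔪)` in `ℍ[ℚ₂]ˣ` is the whole group. -/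
theorem units_generated_by_a_b_and_one_add_m :
    ∀ i j k a b : ℍ[ℚ_[2]],
      i = ⟨0, 1, 0, 0⟩ → j = ⟨0, 0, 1, 0⟩ → k = ⟨0, 0, 0, 1⟩ →
      a = ((2 : ℚ_[2])⁻¹) • (1 + i + j + k) →
      b = 1 + i →
      Subgroup.closure {u : ℍ[ℚ_[2]]ˣ |
        (u : ℍ[ℚ_[2]]) = a ∨ (u : ℍ[ℚ_[2]]) = b ∨
          ‖Quaternion.normSq ((u : ℍ[ℚ_[2]]) - 1)‖ ≤ 1 / 2} = ⊤ := by
  intro i j k a b hi hj hk ha hb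
  -- the anonymous constructors live in `QuaternionAlgebra`, so read off coordinates by `rfl`
  have hi' : i.re = 0 ∧ i.imI = 1 ∧ i.imJ = 0 ∧ i.imK = 0 := by rw [hi]; exact ⟨rfl, rfl, rfl, rfl⟩
  have hj' : j.re = 0 ∧ j.imI = 0 ∧ j.imJ = 1 ∧ j.imK = 0 := by rw [hj]; exact ⟨rfl, rfl, rfl, rfl⟩
  have hk' : k.re = 0 ∧ k.imI = 0 ∧ k.imJ = 0 ∧ k.imK = 1 := by rw [hk]; exact ⟨rfl, rfl, rfl, rfl⟩
  have hNa : Quaternion.normSq a = 1 := by simp [Quaternion.normSq_def', ha, hi', hj', hk']; norm_num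
  have haa : a * a = a - 1 := by ext <;> simp [ha, hi', hj', hk'] <;> norm_num
  have hNb : Quaternion.normSq b = 2 := by simp [Quaternion.normSq_def', hb, hi']; norm_num
  obtain ⟨A, rfl⟩ := Quaternion.isUnit_of_normSq_ne_zero (hNa ▸ one_ne_zero)
  obtain ⟨B, rfl⟩ := Quaternion.isUnit_of_normSq_ne_zero (hNb ▸ two_ne_zero)
  refine (Subgroup.eq_top_iff' _).2 fun u => ?_
  obtain ⟨n, hn⟩ := Quaternion.exists_norm_normSq_mul_zpow_eq_one
    (by rw [hNb, Padic.norm_two_eq_inv_two]; norm_num) u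
  obtain ⟨m, hm⟩ := Quaternion.exists_norm_normSq_mul_pow_sub_one_le_half
    (by rw [hNa, norm_one]) haa hn
  rw [show u = u * B ^ n * A ^ m * (A ^ m)⁻¹ * (B ^ n)⁻¹ by group]
  refine mul_mem (mul_mem (Subgroup.subset_closure ?_)
    (inv_mem (pow_mem (Subgroup.subset_closure ?_) m)))
    (inv_mem (zpow_mem (Subgroup.subset_closure ?_) n))
  · exact Or.inr (Or.inr (by simpa [one_div] using hm))
  · exact Or.inl rfl
  · exact Or.inr (Or.inl rfl)
end

section
/- Let G be a group generated by two elements a and b satisfying a³ = 1 and b*a*b⁻¹ = a⁻¹. Let V be a nonzero finite-dimensional complex vector space and ρ : G →* GL(V) a representation which is irreducible (the only ρ-invariant subspaces of V are 0 and V). Then either ρ(a) is the identity and dim_ℂ V = 1, or ρ(a) is not the identity and dim_ℂ V = 2. -/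
/-!
Since `b` conjugates `a` to its inverse and `G` is generated by `a` and `b`, the element `b²`
is central, so by Schur's lemma `ρ(b²)` is a scalar `μ`. If `ρ(a) = 1`, the image of `ρ` is
generated by `ρ(b)`, and the line through an eigenvector of `ρ(b)` is invariant. Otherwise the
fixed space of `ρ(a)` is invariant, hence zero, so `ρ(a)` has an eigenvector `v` whose eigenvalue
`λ` is a nontrivial cube root of unity. Then `ρ(b) v` is a `λ⁻¹`-eigenvector, `λ⁻¹ ≠ λ`, and
`ρ(b)` maps `ρ(b) v` to `μ v`: the plane spanned by `v` and `ρ(b) v` is invariant, hence all of `V`.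
-/

open Module Module.End Submodule
open LinearMap (GeneralLinearGroup)

section

variable {K V G : Type*} [Field K] [AddCommGroup V] [Module K V] [Group G]

def IsIrreducibleRep (ρ : G →* GeneralLinearGroup K V) : Prop :=
  ∀ W : Submodule K V, (∀ g, W ∈ invtSubmodule (ρ g : End K V)) → W = ⊥ ∨ W = ⊤

theorem Module.End.mem_invtSubmodule_inv [FiniteDimensional K V] {f : GeneralLinearGroup K V}
    {W : Submodule K V} (hW : W ∈ invtSubmodule (f : End K V)) :
    W ∈ invtSubmodule (↑f⁻¹ : End K V) := by
  have hmap : W.map (f : End K V) = W :=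
    eq_of_le_of_finrank_eq ((mem_invtSubmodule_iff_map_le _).1 hW)
      (LinearEquiv.finrank_map_eq f.toLinearEquiv W)
  exact mem_invtSubmodule_symm_iff_le_map (f := f.toLinearEquiv) |>.2 hmap.ge

def invtSubmoduleStabilizer [FiniteDimensional K V] (ρ : G →* GeneralLinearGroup K V)
    (W : Submodule K V) : Subgroup G where
  carrier := {g | W ∈ invtSubmodule (ρ g : End K V)}
  one_mem' := by simp
  mul_mem' hx hy := by simpa [Module.End.mul_eq_comp] using invtSubmodule.comp _ hx hy
  inv_mem' hx := by simpa using mem_invtSubmodule_inv hx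

theorem span_mem_invtSubmodule {f : End K V} {s : Set V} (h : ∀ v ∈ s, f v ∈ span K s) :
    span K s ∈ invtSubmodule f :=
  (mem_invtSubmodule_iff_map_le f).2 ((map_span_le f s _).2 h)

theorem Module.End.mem_eigenspace_inv {f : GeneralLinearGroup K V} {μ : K} {v : V}
    (hv : v ∈ eigenspace (f : End K V) μ) : v ∈ eigenspace (↑f⁻¹ : End K V) μ⁻¹ := by
  rw [mem_eigenspace_iff] at hv ⊢
  have hv' : v = μ • (↑f⁻¹ : End K V) v := by
    rw [← map_smul, ← hv, ← Module.End.mul_apply, ← Units.val_mul, inv_mul_cancel, Units.val_one,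
      Module.End.one_apply]
  rcases eq_or_ne μ 0 with rfl | hμ
  · rw [zero_smul] at hv'
    simp [hv']
  · rw [hv', inv_smul_smul₀ hμ, ← hv']

theorem Module.End.mem_eigenspace_apply_of_conj_eq_inv {f g : GeneralLinearGroup K V}
    (h : g * f * g⁻¹ = f⁻¹) {μ : K} {v : V} (hv : v ∈ eigenspace (f : End K V) μ) :
    (g : End K V) v ∈ eigenspace (f : End K V) μ⁻¹ := by
  have hfg : f * g = g * f⁻¹ :=
    calc f * g = (f⁻¹)⁻¹ * g := by rw [inv_inv]
      _ = (g * f * g⁻¹)⁻¹ * g := by rw [h]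
      _ = g * f⁻¹ := by group
  rw [mem_eigenspace_iff, ← Module.End.mul_apply, ← Units.val_mul, hfg, Units.val_mul,
    Module.End.mul_apply, mem_eigenspace_iff.1 (mem_eigenspace_inv hv), map_smul]

theorem Module.End.HasEigenvector.pow_eq_one {f : End K V} {μ : K} {v : V}
    (hv : f.HasEigenvector μ v) {n : ℕ} (hf : f ^ n = 1) : μ ^ n = 1 := by
  have h : μ ^ n • v = (1 : K) • v := by simpa [hf] using (hv.pow_apply n).symm
  exact smul_left_injective K hv.2 h

theorem sq_mem_center_of_conj_eq_inv {a b : G} (hgen : Subgroup.closure {a, b} = ⊤)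
    (hb : b * a * b⁻¹ = a⁻¹) : b ^ 2 ∈ Subgroup.center G := by
  have hba : b ^ 2 * a = a * b ^ 2 := by
    have h1 : b * a = a⁻¹ * b := by rw [← hb]; group
    have h2 : b * a⁻¹ = a * b :=
      calc b * a⁻¹ = (b * a * b⁻¹)⁻¹ * b := by group
        _ = a * b := by rw [hb, inv_inv]
    calc b ^ 2 * a = b * (b * a) := by rw [sq, mul_assoc]
      _ = b * a⁻¹ * b := by rw [h1, ← mul_assoc]
      _ = a * b ^ 2 := by rw [h2, sq, mul_assoc]
  have hcent : Subgroup.closure {a, b} ≤ Subgroup.centralizer {b ^ 2} := by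
    rw [Subgroup.closure_le]
    rintro _ (rfl | rfl) <;> simp [Subgroup.mem_centralizer_iff, hba, ← pow_succ, ← pow_succ']
  rw [Subgroup.mem_center_iff]
  intro g
  exact (Subgroup.mem_centralizer_iff.1 (hcent (hgen ▸ Subgroup.mem_top g)) _ rfl).symm

namespace IsIrreducibleRep

variable {ρ : G →* GeneralLinearGroup K V} {a b : G}

theorem eq_bot_or_eq_top_of_closure_eq_top [FiniteDimensional K V] (hρ : IsIrreducibleRep ρ)
    {S : Set G} (hS : Subgroup.closure S = ⊤) {W : Submodule K V}
    (hW : ∀ s ∈ S, W ∈ invtSubmodule (ρ s : End K V)) : W = ⊥ ∨ W = ⊤ := by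
  have hstab : ⊤ ≤ invtSubmoduleStabilizer ρ W := hS ▸ (Subgroup.closure_le _).2 hW
  exact hρ W fun g => hstab (Subgroup.mem_top g)

theorem exists_apply_eq_smul_of_commute [IsAlgClosed K] [FiniteDimensional K V] [Nontrivial V]
    (hρ : IsIrreducibleRep ρ) {T : End K V} (hT : ∀ g, Commute T (ρ g : End K V)) :
    ∃ μ : K, ∀ v, T v = μ • v := by
  obtain ⟨μ, hμ⟩ := T.exists_eigenvalue
  have htop : T.eigenspace μ = ⊤ :=
    (hρ _ fun g => mapsTo_genEigenspace_of_comm (hT g) μ 1).resolve_left hμ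
  exact ⟨μ, fun v => mem_eigenspace_iff.1 (htop ▸ mem_top)⟩

theorem finrank_eq_one [IsAlgClosed K] [FiniteDimensional K V] [Nontrivial V]
    (hρ : IsIrreducibleRep ρ) (hgen : Subgroup.closure {a, b} = ⊤) (ha : ρ a = 1) :
    finrank K V = 1 := by
  obtain ⟨β, hβ⟩ := Module.End.exists_eigenvalue (ρ b : End K V)
  obtain ⟨u, hu⟩ := hβ.exists_hasEigenvector
  have hinv : ∀ s ∈ ({a, b} : Set G), (K ∙ u) ∈ invtSubmodule (ρ s : End K V) := by
    rintro _ (rfl | rfl)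
    · simp [ha]
    · refine span_mem_invtSubmodule ?_
      simpa [hu.apply_eq_smul] using mem_span_singleton.2 ⟨β, rfl⟩
  have htop : K ∙ u = ⊤ :=
    (hρ.eq_bot_or_eq_top_of_closure_eq_top hgen hinv).resolve_left (by simpa using hu.2)
  rw [← finrank_top K V, ← htop, finrank_span_singleton hu.2]

theorem eigenspace_one_eq_bot [FiniteDimensional K V] (hρ : IsIrreducibleRep ρ)
    (hgen : Subgroup.closure {a, b} = ⊤) (hb : b * a * b⁻¹ = a⁻¹) (ha : ρ a ≠ 1) :
    eigenspace (ρ a : End K V) 1 = ⊥ := by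
  have hinv : ∀ s ∈ ({a, b} : Set G),
      eigenspace (ρ a : End K V) 1 ∈ invtSubmodule (ρ s : End K V) := by
    rintro _ (rfl | rfl)
    · exact eigenspace_mem_invtSubmodule _ _
    · intro v hv
      simpa using mem_eigenspace_apply_of_conj_eq_inv (by simpa using congr(ρ $hb)) hv
  refine (hρ.eq_bot_or_eq_top_of_closure_eq_top hgen hinv).resolve_right fun htop => ha ?_
  refine Units.ext (LinearMap.ext fun v => ?_)
  have hv : v ∈ eigenspace (ρ a : End K V) 1 := htop ▸ mem_top
  simpa using mem_eigenspace_iff.1 hv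

theorem finrank_eq_two [IsAlgClosed K] [FiniteDimensional K V] [Nontrivial V]
    (hρ : IsIrreducibleRep ρ) (hgen : Subgroup.closure {a, b} = ⊤) (ha3 : a ^ 3 = 1)
    (hb : b * a * b⁻¹ = a⁻¹) {μ : K} (hμ : ∀ v, (ρ (b ^ 2) : End K V) v = μ • v)
    (ha : ρ a ≠ 1) : finrank K V = 2 := by
  obtain ⟨l, hl⟩ := Module.End.exists_eigenvalue (ρ a : End K V)
  obtain ⟨v, hv⟩ := hl.exists_hasEigenvector
  have hl1 : l ≠ 1 := by
    rintro rfl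
    exact hl (hρ.eigenspace_one_eq_bot hgen hb ha)
  have hl3 : l ^ 3 = 1 := hv.pow_eq_one <| by
    rw [← Units.val_pow_eq_pow_val, ← map_pow, ha3, map_one, Units.val_one]
  have hl_ne_inv : l ≠ l⁻¹ := by
    intro h
    have h2 : l * l = 1 := (mul_eq_one_iff_eq_inv₀ (by rintro rfl; simp at hl3)).2 h
    exact hl1 (by linear_combination hl3 - l * h2)
  set w := (ρ b : End K V) v
  have hw : HasEigenvector (ρ a : End K V) l⁻¹ w :=
    ⟨mem_eigenspace_apply_of_conj_eq_inv (by simpa using congr(ρ $hb)) hv.1,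
      fun h => hv.2 ((ρ b).toLinearEquiv.map_eq_zero_iff.1 h)⟩
  have hbw : (ρ b : End K V) w = μ • v := by simpa [sq] using hμ v
  have hindep : LinearIndependent K ![v, w] :=
    eigenvectors_linearIndependent' _ ![l, l⁻¹] (injective_pair_iff_ne.2 hl_ne_inv) _
      (Fin.forall_fin_two.2 ⟨hv, hw⟩)
  have hvW : v ∈ span K {v, w} := subset_span (Set.mem_insert _ _)
  have hwW : w ∈ span K {v, w} := subset_span (Set.mem_insert_of_mem _ rfl)
  have hinv : ∀ s ∈ ({a, b} : Set G), span K {v, w} ∈ invtSubmodule (ρ s : End K V) := by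
    rintro _ (rfl | rfl) <;> refine span_mem_invtSubmodule ?_
    · simpa [hv.apply_eq_smul, hw.apply_eq_smul] using ⟨smul_mem _ l hvW, smul_mem _ l⁻¹ hwW⟩
    · simpa [hbw] using ⟨hwW, smul_mem _ μ hvW⟩
  have htop : span K {v, w} = ⊤ :=
    (hρ.eq_bot_or_eq_top_of_closure_eq_top hgen hinv).resolve_left
      (Submodule.ne_bot_iff _ |>.2 ⟨v, hvW, hv.2⟩)
  rw [← finrank_top K V, ← htop, ← Matrix.range_cons_cons_empty v w ![],
    finrank_span_eq_card hindep, Fintype.card_fin]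

end IsIrreducibleRep

end

/-- Let `G` be a group generated by two elements `a` and `b` satisfying `a³ = 1` and
`b*a*b⁻¹ = a⁻¹`. Let `V` be a nonzero finite-dimensional complex vector space and
`ρ : G →* GL(V)` an irreducible representation (the only `ρ`-invariant subspaces of `V`
are `0` and `V`). Then either `ρ(a)` is the identity and `dim_ℂ V = 1`, or `ρ(a)` is
not the identity and `dim_ℂ V = 2`. -/
theorem irreducible_rep_dim_one_or_two
    {G : Type*} [Group G] (a b : G)
    (hgen : Subgroup.closure ({a, b} : Set G) = ⊤)
    (ha : a ^ 3 = 1) (hb : b * a * b⁻¹ = a⁻¹)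
    {V : Type*} [AddCommGroup V] [Module ℂ V] [FiniteDimensional ℂ V] [Nontrivial V]
    (ρ : G →* LinearMap.GeneralLinearGroup ℂ V)
    (hirr : ∀ W : Submodule ℂ V,
      (∀ g : G, ∀ v ∈ W, (ρ g : V →ₗ[ℂ] V) v ∈ W) → W = ⊥ ∨ W = ⊤) :
    (ρ a = 1 ∧ Module.finrank ℂ V = 1) ∨ (ρ a ≠ 1 ∧ Module.finrank ℂ V = 2) := by
  have hρ : IsIrreducibleRep ρ := hirr
  by_cases ha1 : ρ a = 1
  · exact .inl ⟨ha1, hρ.finrank_eq_one hgen ha1⟩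
  have hcentral := Subgroup.mem_center_iff.1 (sq_mem_center_of_conj_eq_inv hgen hb)
  obtain ⟨μ, hμ⟩ := hρ.exists_apply_eq_smul_of_commute
    fun g => ((Commute.symm (hcentral g)).map ρ).units_val
  exact .inr ⟨ha1, hρ.finrank_eq_two hgen ha hb hμ ha1⟩
end

section
/- Let p be an odd prime and let G be the subgroup of GL₂(ℚ_p) consisting of matrices (a b; c d) with ‖a‖ ≤ 1, ‖b‖ ≤ 1, ‖c‖ ≤ 1/p, ‖d − 1‖ ≤ 1/p and ‖a*d − b*c‖ = 1 (i.e. matrices in GL₂(ℤ_p) congruent to (* *; 0 1) mod p). Let η = (p 0; 0 1) ∈ GL₂(ℚ_p). Then the double coset G·η·G = {g₁*η*g₂ : g₁, g₂ ∈ G} is the union over i = 0, …, p−1 of the right cosets G·(p 0; p·i 1), and these p right cosets are pairwise disjoint. -/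
/-!
Conjugating `g = (a b; c d) ∈ G` by `η = diag(p, 1)` gives `(a pb; c/p d)`, which lies in `G`
as soon as `c/p ≡ 0 mod p`. Since `d ≡ 1 mod p`, right multiplication by the lower unipotent
`(1 0; -pi 1)` changes `c/p` modulo `p` by `-i`; choosing `i ≡ c/p` therefore writes
`η g = h · η · (1 0; pi 1) = h · (p 0; pi 1)` with `h ∈ G`. Conversely the lower left entry of
`g · (p 0; pi 1)` is `p(c + di) ≡ p i mod p²`, so the coset determines `i` modulo `p`.
-/

open IsUltrametricDist

namespace HeckeUp

section Ultrametric

variable {R : Type*} [SeminormedRing R] {r : ℝ}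

theorem norm_mul_le_of_norm_le_one_left {x y : R} (hx : ‖x‖ ≤ 1) (hy : ‖y‖ ≤ r) :
    ‖x * y‖ ≤ r := by
  simpa using norm_mul_le_of_le hx hy

theorem norm_mul_le_of_norm_le_one_right {x y : R} (hx : ‖x‖ ≤ r) (hy : ‖y‖ ≤ 1) :
    ‖x * y‖ ≤ r := by
  simpa using norm_mul_le_of_le hx hy

variable [IsUltrametricDist R]

theorem norm_add_le_of_le_of_le {x y : R} (hx : ‖x‖ ≤ r) (hy : ‖y‖ ≤ r) : ‖x + y‖ ≤ r :=
  (norm_add_le_max x y).trans (max_le hx hy)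

theorem norm_sub_le_of_le_of_le {x y : R} (hx : ‖x‖ ≤ r) (hy : ‖y‖ ≤ r) : ‖x - y‖ ≤ r := by
  simpa [sub_eq_add_neg] using norm_add_le_of_le_of_le hx (y := -y) (by rwa [norm_neg])

theorem norm_le_one_of_norm_sub_one_le [NormOneClass R] (hr : r ≤ 1) {x : R}
    (hx : ‖x - 1‖ ≤ r) : ‖x‖ ≤ 1 := by
  simpa using norm_add_le_of_le_of_le (hx.trans hr) norm_one.le (x := x - 1) (y := 1)

end Ultrametric

/-- For `r = ‖π‖` with `π` a uniformizer this is the group of `g ∈ GL₂(𝒪)` with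
`g ≡ (* *; 0 1) mod π`. -/
def gammaOne (K : Type*) [NormedField K] (r : ℝ) : Set (Matrix (Fin 2) (Fin 2) K) :=
  {m | ‖m 0 0‖ ≤ 1 ∧ ‖m 0 1‖ ≤ 1 ∧ ‖m 1 0‖ ≤ r ∧ ‖m 1 1 - 1‖ ≤ r ∧
    ‖m 0 0 * m 1 1 - m 0 1 * m 1 0‖ = 1}

section GammaOne

variable {K : Type*} [NormedField K] {r : ℝ}

theorem fin_two_of_mem_gammaOne_iff {a b c d : K} :
    !![a, b; c, d] ∈ gammaOne K r ↔
      ‖a‖ ≤ 1 ∧ ‖b‖ ≤ 1 ∧ ‖c‖ ≤ r ∧ ‖d - 1‖ ≤ r ∧ ‖a * d - b * c‖ = 1 :=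
  Iff.rfl

theorem lowerUnipotent_mem_gammaOne {x : K} (hx : ‖x‖ ≤ r) : !![1, 0; x, 1] ∈ gammaOne K r :=
  fin_two_of_mem_gammaOne_iff.2
    ⟨by simp, by simp, hx, by simpa using (norm_nonneg x).trans hx, by simp⟩

theorem norm_apply_one_zero_div_le_one {π : K} (hπ : π ≠ 0) {g : Matrix (Fin 2) (Fin 2) K}
    (hg : g ∈ gammaOne K ‖π‖) : ‖g 1 0 / π‖ ≤ 1 := by
  rw [norm_div, div_le_one (norm_pos_iff.2 hπ)]
  exact hg.2.2.1

variable [IsUltrametricDist K]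

theorem mul_mem_gammaOne (hr : r ≤ 1) {m n : Matrix (Fin 2) (Fin 2) K}
    (hm : m ∈ gammaOne K r) (hn : n ∈ gammaOne K r) : m * n ∈ gammaOne K r := by
  obtain ⟨ha, hb, hc, hd, hdet⟩ := hm
  obtain ⟨ha', hb', hc', hd', hdet'⟩ := hn
  have hd₁ := norm_le_one_of_norm_sub_one_le hr hd
  have hd₁' := norm_le_one_of_norm_sub_one_le hr hd'
  have hmn := congrArg norm (Matrix.det_mul m n)
  simp only [Matrix.det_fin_two, norm_mul, hdet, hdet', mul_one] at hmn
  simp only [gammaOne, Set.mem_ofPred_eq, Matrix.mul_apply, Fin.sum_univ_two] at hmn ⊢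
  refine ⟨?_, ?_, ?_, ?_, hmn⟩
  · exact norm_add_le_of_le_of_le (norm_mul_le_of_norm_le_one_left ha ha')
      (norm_mul_le_of_norm_le_one_left hb (hc'.trans hr))
  · exact norm_add_le_of_le_of_le (norm_mul_le_of_norm_le_one_left ha hb')
      (norm_mul_le_of_norm_le_one_left hb hd₁')
  · exact norm_add_le_of_le_of_le (norm_mul_le_of_norm_le_one_right hc ha')
      (norm_mul_le_of_norm_le_one_left hd₁ hc')
  · rw [show m 1 0 * n 0 1 + m 1 1 * n 1 1 - 1
        = m 1 0 * n 0 1 + (m 1 1 - 1) * n 1 1 + (n 1 1 - 1) by ring]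
    exact norm_add_le_of_le_of_le (norm_add_le_of_le_of_le
      (norm_mul_le_of_norm_le_one_right hc hb') (norm_mul_le_of_norm_le_one_right hd hd₁')) hd'

/-- The witness is `diag(π, 1) · g · (π 0; πk 1)⁻¹`. -/
theorem exists_mem_gammaOne_diag_mul_eq_mul {π : K} (hπ : π ≠ 0) (hπ₁ : ‖π‖ ≤ 1)
    {g : Matrix (Fin 2) (Fin 2) K} (hg : g ∈ gammaOne K ‖π‖) {k : K} (hk : ‖k‖ ≤ 1)
    (hgk : ‖g 1 0 / π - k‖ ≤ ‖π‖) :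
    ∃ h ∈ gammaOne K ‖π‖, !![π, 0; 0, 1] * g = h * !![π, 0; π * k, 1] := by
  obtain ⟨ha, hb, -, hd, hdet⟩ := hg
  refine ⟨!![g 0 0 - π * g 0 1 * k, π * g 0 1; g 1 0 / π - g 1 1 * k, g 1 1],
    fin_two_of_mem_gammaOne_iff.2 ⟨?_, ?_, ?_, hd, ?_⟩, ?_⟩
  · exact norm_sub_le_of_le_of_le ha
      (by simpa [mul_assoc] using norm_mul_le_of_le hπ₁ (norm_mul_le_of_le hb hk))
  · exact norm_mul_le_of_norm_le_one_left hπ₁ hb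
  · rw [show g 1 0 / π - g 1 1 * k = (g 1 0 / π - k) - (g 1 1 - 1) * k by ring]
    exact norm_sub_le_of_le_of_le hgk (norm_mul_le_of_norm_le_one_right hd hk)
  · rw [← hdet]
    congr 1
    field_simp
    ring
  · ext i j
    fin_cases i <;> fin_cases j <;> simp [Matrix.mul_apply] <;> field_simp <;> ring

theorem norm_sub_le_of_mul_eq_mul {π : K} (hπ : π ≠ 0) {g g' : Matrix (Fin 2) (Fin 2) K}
    (hg : g ∈ gammaOne K r) (hg' : g' ∈ gammaOne K r) {k l : K} (hk : ‖k‖ ≤ 1) (hl : ‖l‖ ≤ 1)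
    (h : g * !![π, 0; π * k, 1] = g' * !![π, 0; π * l, 1]) : ‖k - l‖ ≤ r := by
  have h₁₀ := congrFun (congrFun h 1) 0
  simp only [Matrix.mul_apply, Fin.sum_univ_two, Matrix.of_apply, Matrix.cons_val',
    Matrix.cons_val_zero, Matrix.cons_val_one, Matrix.cons_val_fin_one] at h₁₀
  have hkl : g 1 0 + g 1 1 * k = g' 1 0 + g' 1 1 * l :=
    mul_left_cancel₀ hπ (by linear_combination h₁₀)
  rw [show k - l = (g' 1 0 + (g' 1 1 - 1) * l) - (g 1 0 + (g 1 1 - 1) * k) by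
    linear_combination hkl]
  exact norm_sub_le_of_le_of_le
    (norm_add_le_of_le_of_le hg'.2.2.1 (norm_mul_le_of_norm_le_one_right hg'.2.2.2.1 hl))
    (norm_add_le_of_le_of_le hg.2.2.1 (norm_mul_le_of_norm_le_one_right hg.2.2.2.1 hk))

end GammaOne

section Padic

variable {p : ℕ} [Fact p.Prime]

theorem exists_lt_norm_sub_natCast_le {z : ℚ_[p]} (hz : ‖z‖ ≤ 1) :
    ∃ i < p, ‖z - i‖ ≤ ‖(p : ℚ_[p])‖ := by
  obtain ⟨i, hi, hmem⟩ := PadicInt.exists_mem_range ⟨z, hz⟩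
  refine ⟨i, hi, ?_⟩
  have hlt : ‖z - i‖ < 1 := PadicInt.mem_nonunits.1 hmem
  simpa [Padic.norm_p] using (Padic.norm_lt_pow_iff_norm_le_pow_sub_one _ 0).1 (by simpa using hlt)

theorem eq_of_norm_natCast_sub_lt_one {i j : ℕ} (hi : i < p) (hj : j < p)
    (h : ‖(i : ℚ_[p]) - j‖ < 1) : i = j := by
  rw [← Int.cast_natCast, ← Int.cast_natCast j, ← Int.cast_sub,
    Padic.norm_intCast_lt_one_iff] at h
  have := Int.eq_zero_of_abs_lt_dvd h (by rw [abs_lt]; omega)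
  omega

end Padic

end HeckeUp

open HeckeUp

theorem Up_double_coset_decomposition_general (p : ℕ) [Fact p.Prime] :
    let S : Set (Matrix (Fin 2) (Fin 2) ℚ_[p]) :=
      {m | ‖m 0 0‖ ≤ 1 ∧ ‖m 0 1‖ ≤ 1 ∧ ‖m 1 0‖ ≤ 1 / p ∧ ‖m 1 1 - 1‖ ≤ 1 / p ∧
        ‖m 0 0 * m 1 1 - m 0 1 * m 1 0‖ = 1}
    let η : Matrix (Fin 2) (Fin 2) ℚ_[p] := !![(p : ℚ_[p]), 0; 0, 1]
    let C : ℕ → Set (Matrix (Fin 2) (Fin 2) ℚ_[p]) :=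
      fun i => {x | ∃ g ∈ S, x = g * !![(p : ℚ_[p]), 0; (p : ℚ_[p]) * (i : ℚ_[p]), 1]}
    ({x | ∃ g₁ ∈ S, ∃ g₂ ∈ S, x = g₁ * η * g₂} = ⋃ i ∈ Finset.range p, C i) ∧
    (∀ i ∈ Finset.range p, ∀ j ∈ Finset.range p, i ≠ j → Disjoint (C i) (C j)) := by
  intro S η C
  have hS : S = gammaOne ℚ_[p] ‖(p : ℚ_[p])‖ := by
    rw [Padic.norm_p, ← one_div]; rfl
  have hp : (p : ℚ_[p]) ≠ 0 := Nat.cast_ne_zero.2 (Fact.out : p.Prime).ne_zero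
  have hp₁ : ‖(p : ℚ_[p])‖ ≤ 1 := Padic.norm_p_lt_one.le
  refine ⟨Set.Subset.antisymm ?_ ?_, ?_⟩
  · rintro _ ⟨g₁, hg₁, g₂, hg₂, rfl⟩
    rw [hS] at hg₁ hg₂
    obtain ⟨i, hi, hgi⟩ := exists_lt_norm_sub_natCast_le (norm_apply_one_zero_div_le_one hp hg₂)
    obtain ⟨h, hh, hηg⟩ :=
      exists_mem_gammaOne_diag_mul_eq_mul hp hp₁ hg₂ (norm_natCast_le_one ℚ_[p] i) hgi
    refine Set.mem_biUnion (Finset.mem_coe.2 (Finset.mem_range.2 hi))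
      ⟨g₁ * h, hS ▸ mul_mem_gammaOne hp₁ hg₁ hh, ?_⟩
    rw [Matrix.mul_assoc, hηg, Matrix.mul_assoc]
  · simp only [Set.iUnion_subset_iff]
    rintro i - _ ⟨g, hg, rfl⟩
    refine ⟨g, hg, !![1, 0; p * i, 1], hS ▸ lowerUnipotent_mem_gammaOne
      (norm_mul_le_of_norm_le_one_right le_rfl (norm_natCast_le_one ℚ_[p] i)), ?_⟩
    rw [Matrix.mul_assoc]
    simp [η]
  · rintro i hi j hj hij
    refine Set.disjoint_left.2 ?_
    rintro _ ⟨g, hg, rfl⟩ ⟨g', hg', hgg'⟩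
    rw [hS] at hg hg'
    exact hij (eq_of_norm_natCast_sub_lt_one (Finset.mem_range.1 hi) (Finset.mem_range.1 hj)
      ((norm_sub_le_of_mul_eq_mul hp hg hg' (norm_natCast_le_one ℚ_[p] i)
        (norm_natCast_le_one ℚ_[p] j) hgg').trans_lt Padic.norm_p_lt_one))

/-- Coset decomposition for the Hecke operator `U_p`: for `p` an odd prime, with
`G ⊆ GL₂(ℚ_p)` the set of matrices in `GL₂(ℤ_p)` congruent to `(* *; 0 1) mod p` and
`η = (p 0; 0 1)`, the double coset `G·η·G` is the disjoint union of the right cosets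
`G·(p 0; p·i 1)` for `i = 0, …, p−1`. -/
theorem Up_double_coset_decomposition (p : ℕ) [Fact p.Prime] (hp : Odd p) :
    let S : Set (Matrix (Fin 2) (Fin 2) ℚ_[p]) :=
      {m | ‖m 0 0‖ ≤ 1 ∧ ‖m 0 1‖ ≤ 1 ∧ ‖m 1 0‖ ≤ 1 / p ∧ ‖m 1 1 - 1‖ ≤ 1 / p ∧
        ‖m 0 0 * m 1 1 - m 0 1 * m 1 0‖ = 1}
    let η : Matrix (Fin 2) (Fin 2) ℚ_[p] := !![(p : ℚ_[p]), 0; 0, 1]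
    let C : ℕ → Set (Matrix (Fin 2) (Fin 2) ℚ_[p]) :=
      fun i => {x | ∃ g ∈ S, x = g * !![(p : ℚ_[p]), 0; (p : ℚ_[p]) * (i : ℚ_[p]), 1]}
    ({x | ∃ g₁ ∈ S, ∃ g₂ ∈ S, x = g₁ * η * g₂} = ⋃ i ∈ Finset.range p, C i) ∧
    (∀ i ∈ Finset.range p, ∀ j ∈ Finset.range p, i ≠ j → Disjoint (C i) (C j)) :=
  Up_double_coset_decomposition_general p
end
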